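/- For every real M > 1, the squared two-step contraction factor of the deterministic silver stepsize schedule is strictly smaller than that of the constant stepsize 2/(M+1): ((√(2M² − 2M + 1) − M)/(2 − M + √(2M² − 2M + 1)))² < ((M−1)/(M+1))⁴. -/

import Mathlib

/-! Write `s = √(2M² - 2M + 1)`. Since `s² - M² = (M - 1)²`, rationalising gives
`(s - M) / (2 - M + s) = (M - 1)² / (M² + 1 + 2s)`, and for `M ≠ 1` we have `M < s`, so the
denominator exceeds `(M + 1)²`. Squaring the resulting bound `< ((M - 1) / (M + 1))²` gives
the claim. -/

lemma sq_le_two_mul_sq_sub_two_mul_add_one (M : ℝ) : M ^ 2 ≤ 2 * M ^ 2 - 2 * M + 1 := by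
  nlinarith [sq_nonneg (M - 1)]

lemma le_sqrt_two_mul_sq_sub_two_mul_add_one (M : ℝ) : M ≤ √(2 * M ^ 2 - 2 * M + 1) :=
  Real.le_sqrt_of_sq_le (sq_le_two_mul_sq_sub_two_mul_add_one M)

lemma lt_sqrt_two_mul_sq_sub_two_mul_add_one {M : ℝ} (hM : M ≠ 1) :
    M < √(2 * M ^ 2 - 2 * M + 1) :=
  Real.lt_sqrt_of_sq_lt <| by nlinarith [sq_pos_of_ne_zero (sub_ne_zero.mpr hM)]

lemma silver_factor_eq (M : ℝ) :
    (√(2 * M ^ 2 - 2 * M + 1) - M) / (2 - M + √(2 * M ^ 2 - 2 * M + 1))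
      = (M - 1) ^ 2 / (M ^ 2 + 1 + 2 * √(2 * M ^ 2 - 2 * M + 1)) := by
  set s := √(2 * M ^ 2 - 2 * M + 1)
  have hs : s ^ 2 = 2 * M ^ 2 - 2 * M + 1 :=
    Real.sq_sqrt ((sq_nonneg M).trans (sq_le_two_mul_sq_sub_two_mul_add_one M))
  have hMs : M ≤ s := le_sqrt_two_mul_sq_sub_two_mul_add_one M
  have hs0 : 0 ≤ s := Real.sqrt_nonneg _
  rw [div_eq_div_iff (by linarith) (by positivity)]
  linear_combination 2 * hs

theorem stmt_18 (M : ℝ) (hM : 1 < M) :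
    ((Real.sqrt (2 * M ^ 2 - 2 * M + 1) - M)
        / (2 - M + Real.sqrt (2 * M ^ 2 - 2 * M + 1))) ^ 2
      < ((M - 1) / (M + 1)) ^ 4 := by
  have hMs : M < √(2 * M ^ 2 - 2 * M + 1) := lt_sqrt_two_mul_sq_sub_two_mul_add_one hM.ne'
  rw [silver_factor_eq, show ((M - 1) / (M + 1)) ^ 4 = ((M - 1) ^ 2 / (M + 1) ^ 2) ^ 2 by
    rw [← div_pow, ← pow_mul]]
  gcongr ?_ ^ 2
  apply div_lt_div_of_pos_left (by nlinarith) (by positivity)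
  linarith
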